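/- arXiv:1812.02922 — 3 statements merged into one kernel-verified Lean document; each statement's English description precedes it below -/
import Mathlib

section
/- If ζ is a primitive k-th root of unity with k odd, ℓ ≥ 0, 0 ≤ j ≤ ℓ, and 2N ≥ (2ℓ+1)k+1, then the j-th derivative (d/dq)^j (q;q²)_N evaluated at q = ζ is zero. -/
/-! If `k = 2c + 1`, the factors `1 - q^(2m+1)` with `m = c + t k`, `t = 0, …, ℓ`, have exponent
`k (2t + 1)`, so each of these `ℓ + 1` factors vanishes at every `k`-th root of unity `ζ`. Hence
`(q - ζ)^(ℓ+1)` divides `(q;q²)_N`, and the first `ℓ` derivatives of `(q;q²)_N` vanish at `ζ`. -/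

open Polynomial Finset

namespace Polynomial

variable {R : Type*} [CommRing R]

theorem eval_iterate_derivative_eq_zero_of_pow_dvd {p : R[X]} {a : R} {n j : ℕ} (hj : j < n)
    (h : (X - C a) ^ n ∣ p) : (derivative^[j] p).eval a = 0 :=
  dvd_iff_isRoot.mp <| (dvd_pow_self _ (Nat.sub_ne_zero_of_lt hj)).trans
    (pow_sub_dvd_iterate_derivative_of_pow_dvd j h)

theorem X_sub_C_pow_card_dvd_prod_one_sub_X_pow {ι : Type*} {s : Finset ι} {e : ι → ℕ} {ζ : R}
    (h : ∀ i ∈ s, ζ ^ e i = 1) : (X - C ζ) ^ #s ∣ ∏ i ∈ s, (1 - X ^ e i : R[X]) := by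
  rw [← prod_const]
  refine prod_dvd_prod_of_dvd _ _ fun i hi => dvd_iff_isRoot.mpr ?_
  simp [h i hi]

theorem X_sub_C_pow_dvd_prod_range_one_sub_X_pow_odd {k ℓ N : ℕ} {ζ : R} (hζ : ζ ^ k = 1)
    (hodd : Odd k) (hN : (2 * ℓ + 1) * k + 1 ≤ 2 * N) :
    (X - C ζ) ^ (ℓ + 1) ∣ ∏ m ∈ range N, (1 - X ^ (2 * m + 1) : R[X]) := by
  obtain ⟨c, rfl⟩ := hodd
  set f : ℕ → ℕ := fun t => c + t * (2 * c + 1)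
  have hexp (t : ℕ) : 2 * f t + 1 = (2 * t + 1) * (2 * c + 1) := by ring
  have hf_inj : Set.InjOn f (range (ℓ + 1)) := fun a _ b _ hab =>
    Nat.eq_of_mul_eq_mul_right (by omega) (Nat.add_left_cancel hab)
  have hf_maps : (range (ℓ + 1)).image f ⊆ range N := by
    simp only [subset_iff, mem_image, mem_range]
    rintro _ ⟨t, ht, rfl⟩
    have : (2 * t + 1) * (2 * c + 1) ≤ (2 * ℓ + 1) * (2 * c + 1) :=
      Nat.mul_le_mul_right _ (by omega)
    have := hexp t
    omega
  have hroots : ∀ m ∈ (range (ℓ + 1)).image f, ζ ^ (2 * m + 1) = 1 := by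
    simp only [mem_image]
    rintro _ ⟨t, -, rfl⟩
    rw [hexp, pow_mul', hζ, one_pow]
  calc (X - C ζ) ^ (ℓ + 1) = (X - C ζ) ^ #((range (ℓ + 1)).image f) := by
        rw [card_image_of_injOn hf_inj, card_range]
    _ ∣ ∏ m ∈ (range (ℓ + 1)).image f, (1 - X ^ (2 * m + 1) : R[X]) :=
        X_sub_C_pow_card_dvd_prod_one_sub_X_pow hroots
    _ ∣ ∏ m ∈ range N, (1 - X ^ (2 * m + 1) : R[X]) := prod_dvd_prod_of_subset _ _ _ hf_maps

end Polynomial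

theorem deriv_odd_pochhammer_eval_primitiveRoot (k ℓ j N : ℕ) (ζ : ℂ)
    (hζ : IsPrimitiveRoot ζ k) (hodd : Odd k) (hj : j ≤ ℓ)
    (hN : (2 * ℓ + 1) * k + 1 ≤ 2 * N) :
    (derivative^[j] (∏ m ∈ Finset.range N, (1 - X ^ (2 * m + 1) : ℂ[X]))).eval ζ = 0 :=
  eval_iterate_derivative_eq_zero_of_pow_dvd (Nat.lt_succ_of_le hj)
    (X_sub_C_pow_dvd_prod_range_one_sub_X_pow_odd hζ.pow_eq_one hodd hN)
end

section
/- Ramanujan's identity: as formal power series, ∑_{n≥0} (q;q²)_n q^n = ∑_{n≥0} (-1)^n q^{3n²+2n}(1+q^{2n+1}). -/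
open Polynomial Finset

/-- The odd q-Pochhammer symbol `(q;q²)_n` as a polynomial over `ℤ`. -/
noncomputable def qPochOdd (n : ℕ) : ℤ[X] := ∏ j ∈ Finset.range n, (1 - X ^ (2 * j + 1))

noncomputable section
namespace RamanujanAux
open PowerSeries

def gi (m : ℕ) : ℤ⟦X⟧ := PowerSeries.invOfUnit (1 - PowerSeries.X ^ m) 1

lemma gi_mul (m : ℕ) (hm : m ≠ 0) : (1 - PowerSeries.X ^ m) * gi m = 1 := by
  apply PowerSeries.mul_invOfUnit
  simp [PowerSeries.constantCoeff_X, zero_pow hm]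

def Poch (k j : ℕ) : ℤ⟦X⟧ := ∏ i ∈ Finset.range j, (1 - PowerSeries.X ^ (2 * (k + i) + 1))

def GG (k j : ℕ) : ℤ⟦X⟧ := ∏ i ∈ Finset.range j, gi (2 * (k + i) + 1)

lemma Poch_mul_GG (k j : ℕ) : Poch k j * GG k j = 1 := by
  rw [Poch, GG, ← Finset.prod_mul_distrib]
  rw [Finset.prod_congr rfl fun i _ => gi_mul (2 * (k + i) + 1) (by omega), Finset.prod_const_one]

lemma Poch_succ (k j : ℕ) : Poch k (j + 1) = Poch k j * (1 - PowerSeries.X ^ (2 * (k + j) + 1)) :=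
  Finset.prod_range_succ _ _

lemma GG_succ (k j : ℕ) : GG k (j + 1) = GG k j * gi (2 * (k + j) + 1) :=
  Finset.prod_range_succ _ _

lemma GG_succ' (k j : ℕ) : GG k (j + 1) = GG (k + 1) j * gi (2 * k + 1) := by
  rw [GG, Finset.prod_range_succ']
  congr 1
  exact Finset.prod_congr rfl fun i _ => by ring_nf

lemma GG_mul_last (k j : ℕ) : GG k (j + 1) * (1 - PowerSeries.X ^ (2 * (k + j) + 1)) = GG k j := by
  rw [GG_succ, mul_assoc, mul_comm (gi _), gi_mul _ (by omega), mul_one]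

/-- `∑_{n<m} (q;q²)_n q^{(2k+1)n}` -/
def phi (k m : ℕ) : ℤ⟦X⟧ := ∑ n ∈ Finset.range m, Poch 0 n * PowerSeries.X ^ ((2 * k + 1) * n)

/-- partial-theta side members of the chain -/
def sig (k m : ℕ) : ℤ⟦X⟧ :=
  ∑ n ∈ Finset.range m,
    ((-1) ^ n * Poch 0 n * (1 - PowerSeries.X ^ (4 * n + 2 * k + 2)) * GG k (n + 1)) *
      PowerSeries.X ^ (3 * n ^ 2 + (4 * k + 2) * n)

def rhoS (k m : ℕ) : ℤ⟦X⟧ :=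
  ((-1) ^ m * Poch 0 m * GG (k + 1) m) * PowerSeries.X ^ (m * (3 * m + 4 * k + 2))

lemma phi_succ (k m : ℕ) :
    phi k (m + 1) = 1 + PowerSeries.X ^ (2 * k + 1) * phi k m
      - PowerSeries.X ^ (2 * k + 2) * phi (k + 1) m := by
  rw [phi, Finset.sum_range_succ']
  have h : ∀ n, Poch 0 (n + 1) * PowerSeries.X ^ ((2 * k + 1) * (n + 1)) =
      PowerSeries.X ^ (2 * k + 1) * (Poch 0 n * PowerSeries.X ^ ((2 * k + 1) * n))
      - PowerSeries.X ^ (2 * k + 2) * (Poch 0 n * PowerSeries.X ^ ((2 * (k + 1) + 1) * n)) := by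
    intro n
    rw [Poch_succ]
    ring
  rw [Finset.sum_congr rfl fun n _ => h n, Finset.sum_sub_distrib, ← Finset.mul_sum,
    ← Finset.mul_sum]
  simp [phi, Poch]
  ring

/-- the key step identity (denominator-free after clearing) -/
lemma step0 (k m : ℕ) :
    (1 - PowerSeries.X ^ (2 * k + 1)) *
      (Poch 0 m * (1 - PowerSeries.X ^ (4 * m + 2 * k + 2)) * GG k (m + 1) *
        PowerSeries.X ^ (3 * m ^ 2 + (4 * k + 2) * m))
    + PowerSeries.X ^ (2 * k + 2) *
      (Poch 0 m * (1 - PowerSeries.X ^ (4 * m + 2 * (k + 1) + 2)) * GG (k + 1) (m + 1) *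
        PowerSeries.X ^ (3 * m ^ 2 + (4 * (k + 1) + 2) * m))
    = Poch 0 m * GG (k + 1) m * PowerSeries.X ^ (m * (3 * m + 4 * k + 2))
      + Poch 0 (m + 1) * GG (k + 1) (m + 1) *
          PowerSeries.X ^ ((m + 1) * (3 * (m + 1) + 4 * k + 2)) := by
  have hg : (1 - PowerSeries.X ^ (2 * k + 1)) * gi (2 * k + 1) = 1 := gi_mul _ (by omega)
  have e1 : GG k (m + 1) = GG (k + 1) m * gi (2 * k + 1) := GG_succ' k m
  have e2 : GG (k + 1) m = GG (k + 1) (m + 1) * (1 - PowerSeries.X ^ (2 * (k + 1 + m) + 1)) :=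
    (GG_mul_last (k + 1) m).symm
  have e3 : Poch 0 (m + 1) = Poch 0 m * (1 - PowerSeries.X ^ (2 * (0 + m) + 1)) := Poch_succ 0 m
  rw [e1, e2, e3]
  linear_combination (Poch 0 m * (GG (k + 1) (m + 1) * (1 - PowerSeries.X ^ (2 * (k + 1 + m) + 1)))
    * (1 - PowerSeries.X ^ (4 * m + 2 * k + 2)) *
    PowerSeries.X ^ (3 * m ^ 2 + (4 * k + 2) * m)) * hg

lemma sig_succ (k m : ℕ) :
    sig k (m + 1) = sig k m +
      ((-1) ^ m * Poch 0 m * (1 - PowerSeries.X ^ (4 * m + 2 * k + 2)) * GG k (m + 1)) *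
        PowerSeries.X ^ (3 * m ^ 2 + (4 * k + 2) * m) :=
  Finset.sum_range_succ _ _

/-- the chain functional equation for the partial-theta side -/
lemma chainB (k m : ℕ) :
    (1 - PowerSeries.X ^ (2 * k + 1)) * sig k m + PowerSeries.X ^ (2 * k + 2) * sig (k + 1) m
      = 1 - rhoS k m := by
  induction m with
  | zero => simp [sig, rhoS, Poch, GG]
  | succ m ih =>
    rw [sig_succ, sig_succ]
    have h := step0 k m
    rw [Poch_succ] at h
    rw [rhoS, Poch_succ, pow_succ]
    rw [rhoS] at ih
    linear_combination ih + ((-1 : ℤ⟦X⟧)) ^ m * h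

lemma coeff_phi_stable (k N : ℕ) : ∀ m, N + 1 ≤ m →
    PowerSeries.coeff (R := ℤ) N (phi k m) = PowerSeries.coeff (R := ℤ) N (phi k (N + 1)) := by
  intro m hm
  induction m, hm using Nat.le_induction with
  | base => rfl
  | succ m hm ih =>
    have hx : ¬((2 * k + 1) * m ≤ N) := by
      have := Nat.le_mul_of_pos_left m (show 0 < 2 * k + 1 by omega)
      omega
    rw [phi, Finset.sum_range_succ, ← phi, map_add, PowerSeries.coeff_mul_X_pow', if_neg hx,
      add_zero, ih]

lemma coeff_sig_stable (k N : ℕ) : ∀ m, N + 1 ≤ m →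
    PowerSeries.coeff (R := ℤ) N (sig k m) = PowerSeries.coeff (R := ℤ) N (sig k (N + 1)) := by
  intro m hm
  induction m, hm using Nat.le_induction with
  | base => rfl
  | succ m hm ih =>
    have hx : ¬(3 * m ^ 2 + (4 * k + 2) * m ≤ N) := by
      have h1 : m ≤ 3 * m ^ 2 + (4 * k + 2) * m := by nlinarith
      omega
    rw [sig, Finset.sum_range_succ, ← sig, map_add, PowerSeries.coeff_mul_X_pow', if_neg hx,
      add_zero, ih]

lemma main : ∀ N k : ℕ,
    PowerSeries.coeff (R := ℤ) N (phi k (N + 1)) = PowerSeries.coeff (R := ℤ) N (sig k (N + 1)) := by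
  intro N
  induction N using Nat.strong_induction_on with
  | _ N IH =>
  intro k
  have key : ∀ (e : ℕ) (f : ℤ⟦X⟧), (PowerSeries.coeff (R := ℤ) N) (PowerSeries.X ^ e * f) =
      if e ≤ N then PowerSeries.coeff (R := ℤ) (N - e) f else 0 := fun e f => by
    rw [mul_comm]; exact PowerSeries.coeff_mul_X_pow' f e N
  have hrho : (PowerSeries.coeff (R := ℤ) N) (rhoS k (N + 1)) = 0 := by
    rw [rhoS, PowerSeries.coeff_mul_X_pow']
    have h1 : N + 1 ≤ (N + 1) * (3 * (N + 1) + 4 * k + 2) :=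
      Nat.le_mul_of_pos_right _ (by omega)
    rw [if_neg (by omega)]
  have h1 : PowerSeries.coeff (R := ℤ) N (phi k (N + 1)) = (PowerSeries.coeff (R := ℤ) N) 1
      + (if 2 * k + 1 ≤ N then PowerSeries.coeff (R := ℤ) (N - (2 * k + 1)) (phi k N) else 0)
      - (if 2 * k + 2 ≤ N then PowerSeries.coeff (R := ℤ) (N - (2 * k + 2)) (phi (k + 1) N) else 0) := by
    rw [phi_succ, map_sub, map_add, key, key]
  have hsigeq : sig k (N + 1) = 1 - rhoS k (N + 1)
      + PowerSeries.X ^ (2 * k + 1) * sig k (N + 1)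
      - PowerSeries.X ^ (2 * k + 2) * sig (k + 1) (N + 1) := by
    linear_combination chainB k (N + 1)
  have h2 : PowerSeries.coeff (R := ℤ) N (sig k (N + 1)) = (PowerSeries.coeff (R := ℤ) N) 1
      + (if 2 * k + 1 ≤ N then PowerSeries.coeff (R := ℤ) (N - (2 * k + 1)) (sig k (N + 1)) else 0)
      - (if 2 * k + 2 ≤ N then
          PowerSeries.coeff (R := ℤ) (N - (2 * k + 2)) (sig (k + 1) (N + 1)) else 0) := by
    nth_rewrite 1 [hsigeq]
    rw [map_sub, map_add, map_sub, key, key, hrho, sub_zero]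
  rw [h1, h2]
  by_cases hc1 : 2 * k + 1 ≤ N
  · have e1 : PowerSeries.coeff (R := ℤ) (N - (2 * k + 1)) (phi k N)
        = PowerSeries.coeff (R := ℤ) (N - (2 * k + 1)) (sig k (N + 1)) := by
      rw [coeff_phi_stable k (N - (2 * k + 1)) N (by omega), IH (N - (2 * k + 1)) (by omega) k,
        ← coeff_sig_stable k (N - (2 * k + 1)) (N + 1) (by omega)]
    by_cases hc2 : 2 * k + 2 ≤ N
    · have e2 : PowerSeries.coeff (R := ℤ) (N - (2 * k + 2)) (phi (k + 1) N)
          = PowerSeries.coeff (R := ℤ) (N - (2 * k + 2)) (sig (k + 1) (N + 1)) := by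
        rw [coeff_phi_stable (k + 1) (N - (2 * k + 2)) N (by omega),
          IH (N - (2 * k + 2)) (by omega) (k + 1),
          ← coeff_sig_stable (k + 1) (N - (2 * k + 2)) (N + 1) (by omega)]
      rw [e1, e2]
    · rw [e1, if_neg hc2, if_neg hc2]
  · rw [if_neg hc1, if_neg hc1, if_neg (show ¬(2 * k + 2 ≤ N) by omega),
      if_neg (show ¬(2 * k + 2 ≤ N) by omega)]

lemma coe_qPochOdd (n : ℕ) : ((qPochOdd n : ℤ[X]) : ℤ⟦X⟧) = Poch 0 n := by
  rw [qPochOdd, Poch, ← coeToPowerSeries.ringHom_apply, map_prod]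
  refine Finset.prod_congr rfl fun j _ => ?_
  rw [map_sub, map_one, map_pow, coeToPowerSeries.ringHom_apply, Polynomial.coe_X]
  norm_num

lemma lhs_eq (N : ℕ) :
    ((∑ n ∈ Finset.range (N + 1), qPochOdd n * Polynomial.X ^ n : ℤ[X]) : ℤ⟦X⟧)
      = phi 0 (N + 1) := by
  rw [← coeToPowerSeries.ringHom_apply, map_sum, phi]
  refine Finset.sum_congr rfl fun n _ => ?_
  simp only [map_mul, map_pow, coeToPowerSeries.ringHom_apply, coe_qPochOdd, Polynomial.coe_X]
  norm_num

lemma rhs_eq (N : ℕ) :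
    ((∑ n ∈ Finset.range (N + 1),
        ((-1) ^ n : ℤ[X]) * Polynomial.X ^ (3 * n ^ 2 + 2 * n)
          * (1 + Polynomial.X ^ (2 * n + 1)) : ℤ[X]) : ℤ⟦X⟧)
      = sig 0 (N + 1) := by
  rw [← coeToPowerSeries.ringHom_apply, map_sum, sig]
  refine Finset.sum_congr rfl fun n _ => ?_
  have hpg : Poch 0 n * (1 - PowerSeries.X ^ (2 * (0 + n) + 1)) * GG 0 (n + 1) = 1 := by
    have h := Poch_mul_GG 0 (n + 1)
    rw [Poch_succ] at h
    exact h
  have key : Poch 0 n * (1 - PowerSeries.X ^ (4 * n + 2 * 0 + 2)) * GG 0 (n + 1)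
      = 1 + PowerSeries.X ^ (2 * n + 1) := by
    linear_combination (1 + PowerSeries.X ^ (2 * n + 1)) * hpg
  simp only [map_mul, map_pow, map_add, map_neg, map_one]
  simp only [coeToPowerSeries.ringHom_apply, Polynomial.coe_X]
  calc (-1 : ℤ⟦X⟧) ^ n * PowerSeries.X ^ (3 * n ^ 2 + 2 * n) * (1 + PowerSeries.X ^ (2 * n + 1))
      = (-1) ^ n * (Poch 0 n * (1 - PowerSeries.X ^ (4 * n + 2 * 0 + 2)) * GG 0 (n + 1)) *
          PowerSeries.X ^ (3 * n ^ 2 + 2 * n) := by rw [key]; ring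
    _ = _ := by norm_num; ring

end RamanujanAux
end

/-- Ramanujan's identity `∑ (q;q²)_n q^n = ∑ (-1)^n q^{3n²+2n}(1+q^{2n+1})`,
stated coefficientwise: for each `N`, terms with `n > N` contribute nothing to the
coefficient of `q^N` on either side. -/
theorem ramanujan_lost_notebook_identity (N : ℕ) :
    (∑ n ∈ Finset.range (N + 1), qPochOdd n * X ^ n).coeff N =
      (∑ n ∈ Finset.range (N + 1),
        ((-1) ^ n : ℤ[X]) * X ^ (3 * n ^ 2 + 2 * n) * (1 + X ^ (2 * n + 1))).coeff N := by
  rw [← Polynomial.coeff_coe, ← Polynomial.coeff_coe, RamanujanAux.lhs_eq, RamanujanAux.rhs_eq]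
  exact RamanujanAux.main N 0
end

section
/- Let s be a positive integer, ζ_s a primitive s-th root of unity, and h(q) = ∑_{i=0}^{s-1} q^i A_s(i,q^s) a polynomial over ℂ. Then for every ℓ ≥ 0 and every i₀ ∈ {0,...,s-1}: ∑_{j=0}^{ℓ} C_{ℓ,i₀,j}(s) q^{i₀+js} A_s^{(j)}(i₀, q^s) = (1/s) ∑_{k=0}^{s-1} ζ_s^{-k i₀} [(q·d/dq)^ℓ h](ζ_s^k q). -/
/-!
The Euler operator `θ = X · d/dX` commutes with every substitution `X ↦ a X`, so
`(θ^ℓ h)(ζ^k X) = ∑ᵢ ζ^{k i} θ^ℓ (X^i Aᵢ(X^s))`, and orthogonality of the characters of `ℤ/s`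
isolates the summand `i = i₀`. On that summand `θ` acts on `T_j = X^{i₀+js} A^{(j)}(X^s)` by
`θ T_j = (i₀ + j s) T_j + s T_{j+1}`, which is exactly the recursion defining `C_{ℓ,i₀,j}(s)`.
-/

open Polynomial Finset

/-- The triangular integer array `C_{ℓ,i,j}(s)`: `C_{0,0,0}=1`, `C_{ℓ,i,0}=i^ℓ`,
`C_{ℓ,i,j}=0` for `j > ℓ` or `j < 0`, and
`C_{ℓ+1,i,j} = (i+js)·C_{ℓ,i,j} + s·C_{ℓ,i,j-1}`. -/
def Carr (s i : ℤ) : ℕ → ℤ → ℤ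
  | 0, j => if j = 0 then 1 else 0
  | (ℓ + 1), j =>
      if j < 0 ∨ (ℓ : ℤ) + 1 < j then 0
      else if j = 0 then i ^ (ℓ + 1)
      else (i + j * s) * Carr s i ℓ j + s * Carr s i ℓ (j - 1)

section Carr

variable (s i : ℤ) (ℓ : ℕ)

lemma Carr_zero_right : Carr s i ℓ 0 = i ^ ℓ := by
  cases ℓ with
  | zero => simp [Carr]
  | succ n => rw [Carr, if_neg (by omega), if_pos rfl]

lemma Carr_of_neg {j : ℤ} (hj : j < 0) : Carr s i ℓ j = 0 := by
  cases ℓ with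
  | zero => rw [Carr, if_neg (by omega)]
  | succ n => rw [Carr, if_pos (Or.inl hj)]

lemma Carr_of_lt {j : ℤ} (hj : (ℓ : ℤ) < j) : Carr s i ℓ j = 0 := by
  cases ℓ with
  | zero => rw [Carr, if_neg (by omega)]
  | succ n => rw [Carr, if_pos (Or.inr (by push_cast at hj; exact hj))]

lemma Carr_succ {j : ℤ} (hj : 0 ≤ j) :
    Carr s i (ℓ + 1) j = (i + j * s) * Carr s i ℓ j + s * Carr s i ℓ (j - 1) := by
  rcases eq_or_lt_of_le hj with rfl | hj
  · simp [Carr_zero_right, Carr_of_neg, pow_succ, mul_comm]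
  by_cases hℓ : (ℓ : ℤ) + 1 < j
  · simp [Carr_of_lt _ _ _ (show ((ℓ + 1 : ℕ) : ℤ) < j by push_cast; exact hℓ),
      Carr_of_lt _ _ ℓ (show (ℓ : ℤ) < j by omega), Carr_of_lt _ _ ℓ (show (ℓ : ℤ) < j - 1 by omega)]
  · rw [Carr, if_neg (by omega), if_neg hj.ne']

end Carr

theorem iterate_eq_sum_Carr_zsmul {M : Type*} [AddCommGroup M] (θ : M →+ M) (a b : ℤ)
    (T : ℕ → M) (hT : ∀ j : ℕ, θ (T j) = (a + j * b) • T j + b • T (j + 1)) (ℓ : ℕ) :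
    θ^[ℓ] (T 0) = ∑ j ∈ range (ℓ + 1), Carr b a ℓ j • T j := by
  induction ℓ with
  | zero => simp [Carr_zero_right]
  | succ n ih =>
    rw [Function.iterate_succ_apply', ih, map_sum]
    have hCarr (j : ℕ) : Carr b a (n + 1) j • T j =
        ((a + j * b) * Carr b a n j) • T j + (b * Carr b a n (j - 1)) • T j := by
      rw [Carr_succ _ _ _ (Int.natCast_nonneg j), add_smul]
    simp only [map_zsmul, hT, smul_add, smul_smul, sum_add_distrib, hCarr]
    congr 1
    · rw [sum_range_succ _ (n + 1), Carr_of_lt _ _ n (by omega)]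
      simp [mul_comm]
    · rw [sum_range_succ' _ (n + 1), Nat.cast_zero, zero_sub, Carr_of_neg _ _ n (by omega)]
      simp [mul_comm]

noncomputable def eulerOp {R : Type*} [CommSemiring R] : Module.End R R[X] :=
  LinearMap.mulLeft R X ∘ₗ derivative

section EulerOp

variable {R : Type*} [CommSemiring R]

lemma eulerOp_apply (p : R[X]) : eulerOp p = X * derivative p := rfl

lemma coe_eulerOp_pow (ℓ : ℕ) :
    ⇑(eulerOp ^ ℓ : Module.End R R[X]) = (fun g : R[X] => X * derivative g)^[ℓ] :=
  Module.End.coe_pow _ ℓ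

lemma eulerOp_comp_C_mul_X (a : R) (p : R[X]) :
    eulerOp (p.comp (C a * X)) = (eulerOp p).comp (C a * X) := by
  simp only [eulerOp_apply, derivative_comp, derivative_C_mul_X, mul_comp, X_comp]
  ring

lemma eulerOp_pow_comp_C_mul_X (a : R) (ℓ : ℕ) (p : R[X]) :
    (eulerOp ^ ℓ) (p.comp (C a * X)) = ((eulerOp ^ ℓ) p).comp (C a * X) := by
  rw [Module.End.coe_pow]
  exact Function.Commute.iterate_left (eulerOp_comp_C_mul_X a) ℓ p

lemma X_mul_derivative_X_pow (m : ℕ) : X * derivative (X ^ m : R[X]) = C (m : R) * X ^ m := by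
  cases m with
  | zero => simp
  | succ n => rw [derivative_X_pow, Nat.add_sub_cancel, mul_left_comm, ← pow_succ']

lemma eulerOp_X_pow_mul_comp_X_pow (m s : ℕ) (B : R[X]) :
    eulerOp (X ^ m * B.comp (X ^ s)) =
      C (m : R) * (X ^ m * B.comp (X ^ s)) +
        C (s : R) * (X ^ (m + s) * (derivative B).comp (X ^ s)) := by
  rw [eulerOp_apply, derivative_mul, derivative_comp, pow_add]
  calc X * (derivative (X ^ m) * B.comp (X ^ s) +
          X ^ m * (derivative (X ^ s) * (derivative B).comp (X ^ s)))
      = X * derivative (X ^ m) * B.comp (X ^ s) +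
          X ^ m * (X * derivative (X ^ s)) * (derivative B).comp (X ^ s) := by ring
    _ = _ := by rw [X_mul_derivative_X_pow, X_mul_derivative_X_pow]; ring

lemma X_pow_mul_comp_X_pow_comp_C_mul_X {a : R} {s : ℕ} (ha : a ^ s = 1) (m : ℕ) (B : R[X]) :
    (X ^ m * B.comp (X ^ s)).comp (C a * X) = a ^ m • (X ^ m * B.comp (X ^ s)) := by
  rw [mul_comp, X_pow_comp, comp_assoc, X_pow_comp, mul_pow, mul_pow, ← C_pow, ← C_pow, ha,
    C_1, one_mul, smul_eq_C_mul, mul_assoc]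

end EulerOp

lemma eulerOp_pow_X_pow_mul_comp_X_pow {R : Type*} [CommRing R] (s i : ℕ) (A : R[X]) (ℓ : ℕ) :
    (eulerOp ^ ℓ) (X ^ i * A.comp (X ^ s)) =
      ∑ j ∈ range (ℓ + 1),
        C ((Carr s i ℓ j : ℤ) : R) * X ^ (i + j * s) * (derivative^[j] A).comp (X ^ s) := by
  have hT (j : ℕ) : eulerOp (X ^ (i + j * s) * (derivative^[j] A).comp (X ^ s)) =
      ((i : ℤ) + j * s) • (X ^ (i + j * s) * (derivative^[j] A).comp (X ^ s)) +
        (s : ℤ) • (X ^ (i + (j + 1) * s) * (derivative^[j + 1] A).comp (X ^ s)) := by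
    rw [eulerOp_X_pow_mul_comp_X_pow, Function.iterate_succ_apply', add_one_mul, ← add_assoc]
    simp [zsmul_eq_mul]
  have h := iterate_eq_sum_Carr_zsmul eulerOp.toAddMonoidHom i s
    (fun j => X ^ (i + j * s) * (derivative^[j] A).comp (X ^ s)) hT ℓ
  rw [Module.End.coe_pow]
  simpa [zsmul_eq_mul, mul_assoc] using h

lemma eulerOp_pow_dissection_comp_C_mul_X {R : Type*} [CommSemiring R] {a : R} {s : ℕ}
    (ha : a ^ s = 1) (A : ℕ → R[X]) (t : Finset ℕ) (ℓ : ℕ) :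
    ((eulerOp ^ ℓ) (∑ i ∈ t, X ^ i * (A i).comp (X ^ s))).comp (C a * X) =
      ∑ i ∈ t, a ^ i • (eulerOp ^ ℓ) (X ^ i * (A i).comp (X ^ s)) := by
  rw [← eulerOp_pow_comp_C_mul_X, Polynomial.sum_comp]
  simp only [X_pow_mul_comp_X_pow_comp_C_mul_X ha, map_sum, map_smul]

lemma geom_sum_eq_zero_of_pow_eq_one {R : Type*} [CommRing R] [IsDomain R] {ω : R} {s : ℕ}
    (hω : ω ≠ 1) (hs : ω ^ s = 1) : ∑ k ∈ range s, ω ^ k = 0 :=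
  eq_zero_of_ne_zero_of_mul_left_eq_zero (sub_ne_zero_of_ne hω.symm)
    (by rw [mul_neg_geom_sum, hs, sub_self])

lemma IsPrimitiveRoot.sum_zpow_neg_mul_pow_eq_ite {K : Type*} [Field K] {ζ : K} {s : ℕ}
    (hζ : IsPrimitiveRoot ζ s) {i i₀ : ℕ} (hi : i < s) (hi₀ : i₀ < s) :
    ∑ k ∈ range s, ζ ^ (-((k : ℤ) * i₀)) * (ζ ^ k) ^ i = if i = i₀ then (s : K) else 0 := by
  have hζ0 : ζ ≠ 0 := hζ.ne_zero (by omega)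
  have hterm (k : ℕ) : ζ ^ (-((k : ℤ) * i₀)) * (ζ ^ k) ^ i = (ζ ^ ((i : ℤ) - i₀)) ^ k := by
    rw [← pow_mul, ← zpow_natCast, ← zpow_add₀ hζ0, ← zpow_natCast, ← zpow_mul]
    push_cast
    ring_nf
  simp only [hterm]
  split_ifs with h
  · simp [h]
  refine geom_sum_eq_zero_of_pow_eq_one (fun hone => h ?_) ?_
  · have hdvd := (hζ.zpow_eq_one_iff_dvd _).1 hone
    have := Int.eq_zero_of_abs_lt_dvd hdvd (by rw [abs_lt]; omega)
    omega
  · rw [← zpow_natCast, ← zpow_mul, mul_comm, zpow_mul, zpow_natCast, hζ.pow_eq_one, one_zpow]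

theorem IsPrimitiveRoot.sum_zpow_neg_smul_sum_pow_smul {K M : Type*} [Field K] [AddCommGroup M]
    [Module K M] {ζ : K} {s : ℕ} (hζ : IsPrimitiveRoot ζ s) (f : ℕ → M) {i₀ : ℕ} (hi₀ : i₀ < s) :
    ∑ k ∈ range s, ζ ^ (-((k : ℤ) * i₀)) • ∑ i ∈ range s, (ζ ^ k) ^ i • f i = (s : K) • f i₀ := by
  simp only [smul_sum, smul_smul]
  rw [sum_comm]
  simp only [← sum_smul]
  rw [sum_congr rfl fun i hi => by
      rw [hζ.sum_zpow_neg_mul_pow_eq_ite (mem_range.1 hi) hi₀, ite_smul, zero_smul],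
    sum_ite_eq', if_pos (mem_range.2 hi₀)]

theorem euler_operator_dissection_extraction_general (s : ℕ) (ζ : ℂ)
    (hζ : IsPrimitiveRoot ζ s) (A : ℕ → ℂ[X]) (ℓ : ℕ) (i₀ : ℕ) (hi₀ : i₀ < s) :
    ∑ j ∈ Finset.range (ℓ + 1),
        C ((Carr (s : ℤ) (i₀ : ℤ) ℓ (j : ℤ) : ℂ)) * X ^ (i₀ + j * s) *
          (derivative^[j] (A i₀)).comp (X ^ s) =
      (s : ℂ)⁻¹ •
        ∑ k ∈ Finset.range s, ζ ^ (-((k : ℤ) * i₀)) •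
          ((fun g : ℂ[X] => X * derivative g)^[ℓ]
              (∑ i ∈ Finset.range s, X ^ i * (A i).comp (X ^ s))).comp
            (C (ζ ^ k) * X) := by
  have hroot (k : ℕ) : (ζ ^ k) ^ s = 1 := by rw [pow_right_comm, hζ.pow_eq_one, one_pow]
  rw [← coe_eulerOp_pow, ← eulerOp_pow_X_pow_mul_comp_X_pow]
  simp only [eulerOp_pow_dissection_comp_C_mul_X (hroot _)]
  rw [hζ.sum_zpow_neg_smul_sum_pow_smul _ hi₀, inv_smul_smul₀ (Nat.cast_ne_zero.2 (by omega))]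

theorem euler_operator_dissection_extraction (s : ℕ) (hs : 1 ≤ s) (ζ : ℂ)
    (hζ : IsPrimitiveRoot ζ s) (A : ℕ → ℂ[X]) (ℓ : ℕ) (i₀ : ℕ) (hi₀ : i₀ < s) :
    ∑ j ∈ Finset.range (ℓ + 1),
        C ((Carr (s : ℤ) (i₀ : ℤ) ℓ (j : ℤ) : ℂ)) * X ^ (i₀ + j * s) *
          (derivative^[j] (A i₀)).comp (X ^ s) =
      (s : ℂ)⁻¹ •
        ∑ k ∈ Finset.range s, ζ ^ (-((k : ℤ) * i₀)) •
          ((fun g : ℂ[X] => X * derivative g)^[ℓ]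
              (∑ i ∈ Finset.range s, X ^ i * (A i).comp (X ^ s))).comp
            (C (ζ ^ k) * X) :=
  euler_operator_dissection_extraction_general s ζ hζ A ℓ i₀ hi₀
end
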